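/- Let K be a multigraph with a distinguished finite subset U of its vertices, let A ∈ Γ(U), and let x be a real number. For all sequences (t_k) and (ζ_k) of real numbers with ζ_k ≠ 0 for all k, t_k → 0, ζ_k → 0, and t_k/ζ_k → x−1, the sequence f_A(K;t_k,ζ_k,1) · ζ_k^{|A|−|V(K)|} converges to T_A(K;x,1). -/

import Mathlib

attribute [local instance] Classical.propDecidable

/-- A multigraph: a finite vertex type, a finite edge index type, and an endpoint
map sending each edge to an unordered pair of vertices. -/
structure Multigraph where
  V : Type
  E : Type
  [finV : Fintype V]
  [finE : Fintype E]
  ends : E → Sym2 V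

attribute [instance] Multigraph.finV Multigraph.finE

namespace Multigraph

/-- Two vertices are related if some edge of `S` has them as its endpoints. -/
def rel (G : Multigraph) (S : Finset G.E) (v w : G.V) : Prop :=
  ∃ e ∈ S, G.ends e = s(v, w)

/-- `ω(S)`: the number of connected components of the spanning subgraph `(V(G), S)`. -/
noncomputable def omega (G : Multigraph) (S : Finset G.E) : ℕ :=
  Nat.card (Quotient (Relation.EqvGen.setoid (G.rel S)))

/-- `ω(G)`: the number of connected components of `G`. -/
noncomputable def omegaG (G : Multigraph) : ℕ :=
  G.omega Finset.univ

/-- The Negami polynomial `f(G;t,x,y)`. -/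
noncomputable def negami (G : Multigraph) (t x y : ℝ) : ℝ :=
  ∑ S : Finset G.E, t ^ G.omega S * x ^ S.card * y ^ (Fintype.card G.E - S.card)

/-- The Tutte polynomial `T(G;x,y)`. -/
noncomputable def tutte (G : Multigraph) (x y : ℝ) : ℝ :=
  ∑ S : Finset G.E,
    (x - 1) ^ (G.omega S - G.omegaG) *
      (y - 1) ^ (G.omega S + S.card - Fintype.card G.V)

end Multigraph

/-- The setoid on `V` extending a setoid `A` on the subset `U`: its nontrivial
classes are exactly the blocks of `A`. -/
def extendSetoid {V : Type} (U : Set V) (A : Setoid U) : Setoid V where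
  r v w := v = w ∨ ∃ (hv : v ∈ U) (hw : w ∈ U), A.r ⟨v, hv⟩ ⟨w, hw⟩
  iseqv := by
    constructor
    · exact fun v => Or.inl rfl
    · rintro v w (rfl | ⟨hv, hw, h⟩)
      · exact Or.inl rfl
      · exact Or.inr ⟨hw, hv, A.symm h⟩
    · rintro v w z (rfl | ⟨hv, hw, h⟩) (rfl | ⟨hw', hz, h'⟩)
      · exact Or.inl rfl
      · exact Or.inr ⟨hw', hz, h'⟩
      · exact Or.inr ⟨hv, hw, h⟩
      · exact Or.inr ⟨hv, hz, A.trans h h'⟩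

namespace Multigraph

/-- The contraction `K/A` of a multigraph `K` by a partition `A` of a subset `U` of
its vertices: all vertices in a common block of `A` are identified. -/
noncomputable def contract (K : Multigraph) {U : Set K.V} (A : Setoid U) : Multigraph where
  V := Quotient (extendSetoid U A)
  E := K.E
  finV := Fintype.ofFinite _
  finE := K.finE
  ends e := (K.ends e).map (Quotient.mk (extendSetoid U A))

/-- `P(S)`: the partition of `U` in which two vertices lie in the same block iff they
lie in the same connected component of the spanning subgraph `(V(K), S)`. -/
def part (K : Multigraph) (U : Set K.V) (S : Finset K.E) : Setoid U :=
  Setoid.comap Subtype.val (Relation.EqvGen.setoid (K.rel S))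

/-- The auxiliary Negami polynomial `f_A(K;t,x,y)`. -/
noncomputable def negamiAux (K : Multigraph) (U : Set K.V) (A : Setoid U) (t x y : ℝ) : ℝ :=
  ∑ S : Finset K.E,
    if K.part U S = A then
      t ^ (K.omega S - Nat.card (Quotient A)) * x ^ S.card *
        y ^ (Fintype.card K.E - S.card)
    else 0

/-- The auxiliary Tutte polynomial `T_A(K;x,y)`. -/
noncomputable def tutteAux (K : Multigraph) (U : Set K.V) (A : Setoid U) (x y : ℝ) : ℝ :=
  ∑ S : Finset K.E,
    if K.part U S = A then
      (x - 1) ^ (K.omega S - Nat.card (Quotient A)) *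
        (y - 1) ^ (K.omega S + S.card - Fintype.card K.V)
    else 0

end Multigraph

/-- The set of partitions of a finite type is finite. -/
instance setoidFinite {α : Type} [Finite α] : Finite (Setoid α) :=
  Finite.of_injective (fun s : Setoid α => s.r) fun a b h => by
    cases a; cases b; simp only at h; subst h; rfl

noncomputable instance setoidFintype {α : Type} [Finite α] : Fintype (Setoid α) :=
  Fintype.ofFinite _

/-- The number of blocks `|A|` of a partition (setoid) `A`. -/
noncomputable def nblocks {α : Type} (A : Setoid α) : ℕ :=
  Nat.card (Quotient A)

/-- The matrix `T_n(t)` indexed by partitions of `α`, with `(A,B)`-entry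
`t^{|A∧B|}` where `A∧B` is the finest common coarsening (the join `A ⊔ B`). -/
noncomputable def Tmat (α : Type) [Finite α] (t : ℝ) :
    Matrix (Setoid α) (Setoid α) ℝ :=
  Matrix.of fun A B => t ^ nblocks (A ⊔ B)

/-- The matrix `L_n(x)` indexed by partitions of `α`, with `(A,B)`-entry
`(x-1)^{|A∧B|-1}` if `|A∧B| + n = |A| + |B|` and `0` otherwise. -/
noncomputable def Lmat (α : Type) [Finite α] (n : ℕ) (x : ℝ) :
    Matrix (Setoid α) (Setoid α) ℝ :=
  Matrix.of fun A B =>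
    if nblocks (A ⊔ B) + n = nblocks A + nblocks B then
      (x - 1) ^ (nblocks (A ⊔ B) - 1)
    else 0

/-- The connectivity matrix `A_n` indexed by partitions of `α`, with `(A,B)`-entry
`1` if `|A∧B| = 1` and `0` otherwise. -/
noncomputable def Amat (α : Type) [Finite α] :
    Matrix (Setoid α) (Setoid α) ℝ :=
  Matrix.of fun A B => if nblocks (A ⊔ B) = 1 then (1 : ℝ) else 0

/-- `G` is an `n`-sum of `K` and `H` along `U`: `V(G) = V(K) ∪ V(H)`,
`V(K) ∩ V(H) = U`, and `E(G)` is the disjoint union of `E(K)` and `E(H)` with the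
inherited endpoint maps. -/
structure NSum (G K H : Multigraph) (U : Set G.V) where
  ιK : K.V → G.V
  ιH : H.V → G.V
  injK : Function.Injective ιK
  injH : Function.Injective ιH
  cover : Set.range ιK ∪ Set.range ιH = Set.univ
  inter : Set.range ιK ∩ Set.range ιH = U
  edgeEquiv : G.E ≃ K.E ⊕ H.E
  endsK : ∀ a, G.ends (edgeEquiv.symm (Sum.inl a)) = (K.ends a).map ιK
  endsH : ∀ a, G.ends (edgeEquiv.symm (Sum.inr a)) = (H.ends a).map ιH

namespace NSum

variable {G K H : Multigraph} {U : Set G.V}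

/-- The copy of a partition `A` of `U` on the corresponding subset of `V(K)`. -/
def pullK (σ : NSum G K H U) (A : Setoid U) : Setoid (σ.ιK ⁻¹' U : Set K.V) :=
  Setoid.comap (fun v => ⟨σ.ιK v.1, v.2⟩) A

/-- The copy of a partition `A` of `U` on the corresponding subset of `V(H)`. -/
def pullH (σ : NSum G K H U) (A : Setoid U) : Setoid (σ.ιH ⁻¹' U : Set H.V) :=
  Setoid.comap (fun v => ⟨σ.ιH v.1, v.2⟩) A

/-- The contraction `K/A` for a partition `A` of the common vertex set `U`. -/
noncomputable def contractK (σ : NSum G K H U) (A : Setoid U) : Multigraph :=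
  K.contract (σ.pullK A)

/-- The contraction `H/B` for a partition `B` of the common vertex set `U`. -/
noncomputable def contractH (σ : NSum G K H U) (B : Setoid U) : Multigraph :=
  H.contract (σ.pullH B)

end NSum

/-!
Each `S` with `P(S) = A` contributes
`t^(ω(S)-|A|) ζ^(|S|+|A|-|V|) = (t/ζ)^(ω(S)-|A|) ζ^(ω(S)+|S|-|V|)`
to the rescaled `f_A`, which tends to `(x-1)^(ω(S)-|A|) 0^(ω(S)+|S|-|V|)`, the term of `S` in
`T_A(K;x,1)`. Both exponents are natural numbers: `|A| ≤ ω(S)` because `P(S)` is the trace of the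
components on `U`, and `|V| ≤ ω(S) + |S|` because each edge merges at most two components.
-/

namespace Relation

variable {α : Type*} {r r' : α → α → Prop} {v w : α}

theorem EqvGen.or_of_forall_or_eq_pair (h : ∀ a b, r' a b → r a b ∨ s(a, b) = s(v, w))
    {a b : α} (hab : EqvGen r' a b) :
    EqvGen r a b ∨
      ((EqvGen r a v ∨ EqvGen r a w) ∧ (EqvGen r b v ∨ EqvGen r b w)) := by
  induction hab with
  | rel a b hab =>
    rcases h a b hab with hab | hab
    · exact Or.inl (.rel _ _ hab)
    · rcases Sym2.eq_iff.1 hab with ⟨rfl, rfl⟩ | ⟨rfl, rfl⟩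
      · exact Or.inr ⟨.inl (.refl _), .inr (.refl _)⟩
      · exact Or.inr ⟨.inr (.refl _), .inl (.refl _)⟩
  | refl a => exact Or.inl (.refl a)
  | symm a b _ ih => exact ih.imp (.symm _ _) And.symm
  | trans a b c _ _ ihab ihbc =>
    have transport : ∀ {x y}, EqvGen r x y →
        (EqvGen r y v ∨ EqvGen r y w) → (EqvGen r x v ∨ EqvGen r x w) :=
      fun hxy => Or.imp (.trans _ _ _ hxy) (.trans _ _ _ hxy)
    rcases ihab with hab | ⟨ha, hb⟩ <;> rcases ihbc with hbc | ⟨hb', hc⟩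
    · exact Or.inl (.trans _ _ _ hab hbc)
    · exact Or.inr ⟨transport hab hb', hc⟩
    · exact Or.inr ⟨ha, transport (.symm _ _ hbc) hb⟩
    · exact Or.inr ⟨ha, hc⟩

theorem card_quotient_eqvGen_le_add_one [Finite α] (hle : r ≤ r')
    (h : ∀ a b, r' a b → r a b ∨ s(a, b) = s(v, w)) :
    Nat.card (Quotient (EqvGen.setoid r)) ≤ Nat.card (Quotient (EqvGen.setoid r')) + 1 := by
  let coarsen : Quotient (EqvGen.setoid r) → Quotient (EqvGen.setoid r') :=
    Quotient.map' id fun _ _ => EqvGen.mono hle _ _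
  -- Adding the pair `(v, w)` merges at most the classes of `v` and `w`.
  let f (c : Quotient (EqvGen.setoid r)) : Option (Quotient (EqvGen.setoid r')) :=
    if c = Quotient.mk _ v then none else some (coarsen c)
  have hf : Function.Injective f := by
    intro c₁ c₂ hc
    induction c₁ using Quotient.inductionOn with | h a =>
    induction c₂ using Quotient.inductionOn with | h b =>
    by_cases ha : Quotient.mk (EqvGen.setoid r) a = Quotient.mk _ v <;>
      by_cases hb : Quotient.mk (EqvGen.setoid r) b = Quotient.mk _ v <;>
      simp only [f, ha, hb, if_true, if_false, reduceCtorEq, Option.some_inj] at hc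
    · exact ha.trans hb.symm
    · have ha' : ¬ EqvGen r a v := fun h => ha (Quotient.sound h)
      have hb' : ¬ EqvGen r b v := fun h => hb (Quotient.sound h)
      rcases EqvGen.or_of_forall_or_eq_pair h (Quotient.exact hc) with hab | ⟨haw, hbw⟩
      · exact Quotient.sound hab
      · exact Quotient.sound
          (.trans _ _ _ (haw.resolve_left ha') (.symm _ _ (hbw.resolve_left hb')))
  simpa only [Finite.card_option] using Nat.card_le_card_of_injective f hf

theorem card_quotient_eqvGen_of_forall_not (h : ∀ a b, ¬ r a b) :
    Nat.card (Quotient (EqvGen.setoid r)) = Nat.card α := by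
  have heq : EqvGen r = Eq :=
    le_antisymm ((EqvGen.mono fun a b hab => absurd hab (h a b)).trans
      (Equivalence.eqvGen_eq eq_equivalence).le) fun a _ hab => hab ▸ .refl a
  refine (Nat.card_congr (Equiv.ofBijective (Quotient.mk _) ⟨?_, Quotient.mk_surjective⟩)).symm
  intro a b hab
  exact heq ▸ Quotient.exact hab

end Relation

namespace Multigraph

variable (K : Multigraph)

theorem omega_empty : K.omega ∅ = Fintype.card K.V := by
  rw [omega, ← Nat.card_eq_fintype_card]
  exact Relation.card_quotient_eqvGen_of_forall_not fun _ _ ⟨_, he, _⟩ => by simp at he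

theorem omega_le_omega_insert_add_one (S : Finset K.E) (e : K.E) :
    K.omega S ≤ K.omega (insert e S) + 1 := by
  obtain ⟨v, w, hvw⟩ : ∃ v w, K.ends e = s(v, w) :=
    Sym2.ind (fun v w => ⟨v, w, rfl⟩) (K.ends e)
  refine Relation.card_quotient_eqvGen_le_add_one (v := v) (w := w)
    (fun a b ⟨e', he', hab⟩ => ⟨e', Finset.mem_insert_of_mem he', hab⟩) ?_
  rintro a b ⟨e', he', hab⟩
  rcases Finset.mem_insert.1 he' with rfl | he'
  · exact Or.inr (hab.symm.trans hvw)
  · exact Or.inl ⟨e', he', hab⟩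

theorem card_V_le_omega_add_card (S : Finset K.E) : Fintype.card K.V ≤ K.omega S + S.card := by
  induction S using Finset.induction_on with
  | empty => simp [omega_empty]
  | insert e S he ih =>
    rw [Finset.card_insert_of_notMem he]
    have := K.omega_le_omega_insert_add_one S e
    omega

theorem card_quotient_part_le_omega (U : Set K.V) (S : Finset K.E) :
    Nat.card (Quotient (K.part U S)) ≤ K.omega S :=
  (Nat.card_congr (Setoid.comapQuotientEquiv _ _)).trans_le (Finite.card_subtype_le _)

end Multigraph

theorem pow_mul_pow_mul_zpow_sub {F : Type*} [Field F] (t : F) {z : F} (hz : z ≠ 0)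
    {a c s n : ℕ} (hac : a ≤ c) (hn : n ≤ c + s) :
    t ^ (c - a) * z ^ s * z ^ ((a : ℤ) - n) = (t / z) ^ (c - a) * z ^ (c + s - n) := by
  rw [div_pow, div_mul_eq_mul_div, eq_div_iff (pow_ne_zero _ hz), mul_assoc, mul_assoc,
    ← zpow_natCast z s, ← zpow_natCast z (c + s - n), ← zpow_natCast z (c - a),
    ← zpow_add₀ hz, ← zpow_add₀ hz]
  congr 2
  push_cast [hac, hn]
  ring

theorem negamiAux_limit_tutteAux_general
    (K : Multigraph) (U : Set K.V) (A : Setoid ↥U) (x : ℝ)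
    (t z : ℕ → ℝ) (hz : ∀ k, z k ≠ 0)
    (hz0 : Filter.Tendsto z Filter.atTop (nhds 0))
    (hratio : Filter.Tendsto (fun k => t k / z k) Filter.atTop (nhds (x - 1))) :
    Filter.Tendsto
      (fun k => K.negamiAux U A (t k) (z k) 1 *
        z k ^ ((nblocks A : ℤ) - (Fintype.card K.V : ℤ)))
      Filter.atTop (nhds (K.tutteAux U A x 1)) := by
  simp only [Multigraph.negamiAux, Multigraph.tutteAux, Finset.sum_mul]
  refine tendsto_finsetSum _ fun S _ => ?_
  by_cases hS : K.part U S = A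
  · subst hS
    have hA := K.card_quotient_part_le_omega U S
    have hV := K.card_V_le_omega_add_card S
    simp only [if_true, one_pow, mul_one, nblocks, pow_mul_pow_mul_zpow_sub _ (hz _) hA hV,
      sub_self]
    exact (hratio.pow _).mul (hz0.pow _)
  · simpa only [hS, if_false, zero_mul] using tendsto_const_nhds

/-- `f_A(K;t_k,ζ_k,1) · ζ_k^{|A|−|V(K)|} → T_A(K;x,1)` whenever
`t_k → 0`, `ζ_k → 0` (with `ζ_k ≠ 0`) and `t_k/ζ_k → x−1`. -/
theorem negamiAux_limit_tutteAux
    (K : Multigraph) (U : Set K.V) (A : Setoid ↥U) (x : ℝ)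
    (t z : ℕ → ℝ) (hz : ∀ k, z k ≠ 0)
    (ht : Filter.Tendsto t Filter.atTop (nhds 0))
    (hz0 : Filter.Tendsto z Filter.atTop (nhds 0))
    (hratio : Filter.Tendsto (fun k => t k / z k) Filter.atTop (nhds (x - 1))) :
    Filter.Tendsto
      (fun k => K.negamiAux U A (t k) (z k) 1 *
        z k ^ ((nblocks A : ℤ) - (Fintype.card K.V : ℤ)))
      Filter.atTop (nhds (K.tutteAux U A x 1)) :=
  negamiAux_limit_tutteAux_general K U A x t z hz hz0 hratio
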